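/- arXiv:2604.01578 — 9 statements merged into one kernel-verified Lean document; each statement's English description precedes it below -/
import Mathlib

section
/- For any integer n ≥ 0, the convergent series D(n) := Σ_{k=0}^∞ k^n / k! satisfies D(n) = b(n) · e, where e is Euler's number and (b(n)) are the Bell numbers defined by b(0) = 1 and b(n+1) = Σ_{k=0}^n C(n,k) b(k). -/
/-!
Shifting the summation index and expanding `(k + 1) ^ n` binomially shows that the sums
`D n = ∑ k, k ^ n / k!` obey the Bell recurrence `D (n + 1) = ∑ j ≤ n, C(n, j) D j`,
while `D 0 = ∑ k, 1 / k! = e`. Hence `D n = b n * e` by strong induction.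
-/

open Finset Nat

lemma succ_pow_succ_div_factorial_succ (n k : ℕ) :
    ((k + 1 : ℕ) : ℝ) ^ (n + 1) / ((k + 1)! : ℝ) =
      ∑ j ∈ range (n + 1), (n.choose j : ℝ) * ((k : ℝ) ^ j / (k ! : ℝ)) := by
  have hk : ((k : ℝ) + 1) ≠ 0 := by positivity
  rw [cast_succ, factorial_succ, cast_mul, cast_succ, pow_succ, mul_comm ((k : ℝ) + 1),
    mul_div_mul_right _ _ hk, add_pow, sum_div]
  refine sum_congr rfl fun j _ => ?_
  rw [one_pow, mul_one, mul_comm, mul_div_assoc]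

lemma hasSum_pow_succ_div_factorial {n : ℕ} {D : ℕ → ℝ}
    (hD : ∀ j ≤ n, HasSum (fun k : ℕ => (k : ℝ) ^ j / (k ! : ℝ)) (D j)) :
    HasSum (fun k : ℕ => (k : ℝ) ^ (n + 1) / (k ! : ℝ))
      (∑ j ∈ range (n + 1), (n.choose j : ℝ) * D j) := by
  have hshift : HasSum (fun k : ℕ => ((k + 1 : ℕ) : ℝ) ^ (n + 1) / ((k + 1)! : ℝ))
      (∑ j ∈ range (n + 1), (n.choose j : ℝ) * D j) := by
    simp_rw [succ_pow_succ_div_factorial_succ]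
    exact hasSum_sum fun j hj => (hD j (Nat.lt_succ_iff.mp (mem_range.mp hj))).mul_left _
  simpa using
    (hasSum_nat_add_iff (f := fun k : ℕ => (k : ℝ) ^ (n + 1) / (k ! : ℝ)) 1).mp hshift

lemma hasSum_pow_zero_div_factorial :
    HasSum (fun k : ℕ => (k : ℝ) ^ 0 / (k ! : ℝ)) (Real.exp 1) := by
  simpa [Real.exp_eq_exp_ℝ] using NormedSpace.expSeries_div_hasSum_exp (1 : ℝ)

/-- Dobiński's formula: `∑_{k=0}^∞ k^n / k! = b(n) · e` where `b` are the Bell numbers. -/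
theorem stmt_1 (b : ℕ → ℝ) (hb0 : b 0 = 1)
    (hb : ∀ n : ℕ, b (n + 1) = ∑ k ∈ Finset.range (n + 1), (n.choose k : ℝ) * b k)
    (n : ℕ) :
    ∑' k : ℕ, (k : ℝ) ^ n / (k.factorial : ℝ) = b n * Real.exp 1 := by
  suffices h : HasSum (fun k : ℕ => (k : ℝ) ^ n / (k ! : ℝ)) (b n * Real.exp 1) from h.tsum_eq
  induction n using Nat.strong_induction_on with
  | _ n ih =>
    cases n with
    | zero => simpa [hb0] using hasSum_pow_zero_div_factorial
    | succ n =>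
      rw [hb, sum_mul]
      simp_rw [mul_assoc]
      exact hasSum_pow_succ_div_factorial fun j hj => ih j (Nat.lt_succ_of_le hj)
end

section
/- For any integers r ≥ 1 and n ≥ 0 and any real (or complex) x, the convergent series D_r(n; x) := Σ_{k=0}^∞ k^n x^k / (k!)^r satisfies the recurrence D_r(n+r; x) = x · Σ_{k=0}^n C(n,k) · D_r(k; x). -/
/-!
Since `(k+1)! = (k+1) · k!`, shifting the index by one turns the `k`-th term of `D_r(n+r; x)`
into `x · (k+1)^n x^k / (k!)^r`; expanding `(k+1)^n` by the binomial theorem and exchanging the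
finite sum with the series gives the recurrence. The series converge absolutely because
`k^m |x|^k / (k!)^r ≤ (2^m |x|)^k / k!` for `r ≥ 1`.
-/

open Finset Nat

def dSeriesTerm {K : Type*} [DivisionRing K] (r m : ℕ) (x : K) (k : ℕ) : K :=
  (k : K) ^ m * x ^ k / (k ! : K) ^ r

noncomputable def dSeries {K : Type*} [DivisionRing K] [TopologicalSpace K] (r m : ℕ) (x : K) :
    K :=
  ∑' k, dSeriesTerm r m x k

theorem dSeriesTerm_zero_right {K : Type*} [DivisionRing K] {r m : ℕ} (hm : m ≠ 0) (x : K) :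
    dSeriesTerm r m x 0 = 0 := by
  simp [dSeriesTerm, hm]

theorem dSeriesTerm_add_left_succ {K : Type*} [Field K] [CharZero K] (r n : ℕ) (x : K) (k : ℕ) :
    dSeriesTerm r (n + r) x (k + 1) =
      x * ∑ i ∈ range (n + 1), (n.choose i : K) * dSeriesTerm r i x k := by
  have hshift :
      dSeriesTerm r (n + r) x (k + 1) = ((k : K) + 1) ^ n * x ^ (k + 1) / (k ! : K) ^ r := by
    have hk : ((k : K) + 1) ≠ 0 := by exact_mod_cast k.succ_ne_zero
    simp only [dSeriesTerm, factorial_succ]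
    push_cast
    rw [pow_add, mul_pow]
    field_simp
  rw [hshift, add_pow, mul_sum, sum_mul, sum_div]
  refine sum_congr rfl fun i _ => ?_
  simp only [dSeriesTerm, one_pow, mul_one]
  ring

section

variable {𝕜 : Type*} [RCLike 𝕜]

theorem norm_dSeriesTerm_le {r : ℕ} (hr : 1 ≤ r) (m : ℕ) (x : 𝕜) (k : ℕ) :
    ‖dSeriesTerm r m x k‖ ≤ (2 ^ m * ‖x‖) ^ k / k ! := by
  have hfact : (k ! : ℝ) ≤ (k ! : ℝ) ^ r :=
    le_self_pow₀ (by exact_mod_cast k.factorial_pos) (by omega)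
  have hpow : (k : ℝ) ^ m ≤ (2 ^ m) ^ k := by
    calc (k : ℝ) ^ m ≤ (2 ^ k) ^ m := by gcongr; exact_mod_cast Nat.lt_two_pow_self.le
      _ = (2 ^ m) ^ k := by rw [← pow_mul, ← pow_mul, Nat.mul_comm]
  rw [dSeriesTerm, norm_div, norm_mul, norm_pow, norm_pow, norm_pow, RCLike.norm_natCast,
    RCLike.norm_natCast, mul_pow]
  gcongr

theorem summable_dSeriesTerm {r : ℕ} (hr : 1 ≤ r) (m : ℕ) (x : 𝕜) :
    Summable (dSeriesTerm r m x) :=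
  .of_norm_bounded (Real.summable_pow_div_factorial _) (norm_dSeriesTerm_le hr m x)

theorem dSeries_add_left {r : ℕ} (hr : 1 ≤ r) (n : ℕ) (x : 𝕜) :
    dSeries r (n + r) x = x * ∑ k ∈ range (n + 1), (n.choose k : 𝕜) * dSeries r k x := by
  have hsummable (k : ℕ) : Summable fun j => (n.choose k : 𝕜) * dSeriesTerm r k x j :=
    (summable_dSeriesTerm hr k x).mul_left _
  calc dSeries r (n + r) x = ∑' j, dSeriesTerm r (n + r) x (j + 1) := by
        rw [dSeries, (summable_dSeriesTerm hr _ x).tsum_eq_zero_add,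
          dSeriesTerm_zero_right (by omega), zero_add]
    _ = x * ∑' j, ∑ k ∈ range (n + 1), (n.choose k : 𝕜) * dSeriesTerm r k x j := by
        simp only [dSeriesTerm_add_left_succ, tsum_mul_left]
    _ = x * ∑ k ∈ range (n + 1), (n.choose k : 𝕜) * dSeries r k x := by
        rw [Summable.tsum_finsetSum fun k _ => hsummable k]
        simp only [dSeries, tsum_mul_left]

end

/-- Recurrence for `D_r(n; x) = ∑_{k=0}^∞ k^n x^k / (k!)^r`:
`D_r(n+r; x) = x · ∑_{k=0}^n C(n,k) D_r(k; x)`. -/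
theorem stmt_2 (r n : ℕ) (hr : 1 ≤ r) (x : ℝ) :
    ∑' k : ℕ, (k : ℝ) ^ (n + r) * x ^ k / (k.factorial : ℝ) ^ r =
      x * ∑ k ∈ Finset.range (n + 1), (n.choose k : ℝ) *
        (∑' j : ℕ, (j : ℝ) ^ k * x ^ j / (j.factorial : ℝ) ^ r) :=
  dSeries_add_left hr n x
end

section
/- For any integers r ≥ 1 and n ≥ 0 and any x, D_r(n; x) = Σ_{j=0}^{r-1} b_{r,j}(n; x) · D_r(j; x), where the coefficients b_{r,j}(n; x) are defined by b_{r,j}(n; x) = δ_{j,n} for 0 ≤ n ≤ r−1 and the recurrence b_{r,j}(n+r; x) = x · Σ_{k=0}^n C(n,k) b_{r,j}(k; x) for n ≥ 0. -/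
/-!
Dropping the vanishing `k = 0` term, writing `k = i + 1` and using
`(i + 1)^r / ((i + 1)!)^r = 1 / (i!)^r`, the binomial theorem gives
`D_r(n + r; x) = x ∑_{j ≤ n} C(n, j) D_r(j; x)`: the sequence `n ↦ D_r(n; x)` satisfies the same
linear recurrence as each `n ↦ b_{r,j}(n; x)`. A solution of such a recurrence is determined by its
first `r` values, and `b_{r,0}, …, b_{r,r-1}` are the solutions with unit initial values.
-/

open Finset Asymptotics

/-- `D_r(n; x)`. -/
noncomputable def factorialPowSeries (r n : ℕ) (x : ℝ) : ℝ :=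
  ∑' k : ℕ, (k : ℝ) ^ n * x ^ k / (k.factorial : ℝ) ^ r

theorem eq_sum_mul_of_linear_recurrence {R : Type*} [CommSemiring R] {r : ℕ} (hr : 0 < r)
    (c : ℕ → ℕ → R) (b : ℕ → ℕ → R) (d : ℕ → R)
    (hb_init : ∀ j n, n < r → b j n = if j = n then 1 else 0)
    (hb_rec : ∀ j n, b j (n + r) = ∑ k ∈ range (n + 1), c n k * b j k)
    (hd_rec : ∀ n, d (n + r) = ∑ k ∈ range (n + 1), c n k * d k) (n : ℕ) :
    d n = ∑ j ∈ range r, b j n * d j := by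
  induction n using Nat.strong_induction_on with
  | _ n ih =>
    rcases lt_or_ge n r with hn | hn
    · simp [hb_init _ n hn, mem_range.2 hn]
    · obtain ⟨m, rfl⟩ := Nat.exists_eq_add_of_le' hn
      calc d (m + r) = ∑ k ∈ range (m + 1), c m k * ∑ j ∈ range r, b j k * d j := by
            rw [hd_rec]
            refine sum_congr rfl fun k hk => ?_
            rw [ih k (by simp at hk; omega)]
        _ = ∑ j ∈ range r, b j (m + r) * d j := by
            simp only [hb_rec, mul_sum, sum_mul, mul_assoc]
            exact sum_comm

theorem summable_pow_mul_pow_div_factorial_pow {r : ℕ} (hr : 1 ≤ r) (x : ℝ) (n : ℕ) :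
    Summable fun k : ℕ => (k : ℝ) ^ n * x ^ k / (k.factorial : ℝ) ^ r := by
  refine summable_of_isBigO_nat (Real.summable_pow_div_factorial (2 * |x|)) ?_
  have hpow : (fun k : ℕ => (k : ℝ) ^ n * (|x| ^ k / k.factorial)) =O[Filter.atTop]
      fun k : ℕ => (2 : ℝ) ^ k * (|x| ^ k / k.factorial) :=
    (isLittleO_pow_const_const_pow_of_one_lt n one_lt_two).isBigO.mul (isBigO_refl _ _)
  refine (IsBigO.of_norm_eventuallyLE (Filter.Eventually.of_forall fun k => ?_)).trans
    (hpow.congr_right fun k => by rw [mul_pow]; ring)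
  have hfac : (1 : ℝ) ≤ k.factorial := by exact_mod_cast k.factorial_pos
  dsimp only
  rw [norm_div, norm_mul, norm_pow, norm_pow, norm_pow, Real.norm_natCast, Real.norm_natCast,
    Real.norm_eq_abs, mul_div_assoc]
  gcongr
  exact le_self_pow₀ hfac (by omega)

theorem pow_mul_pow_div_factorial_pow_succ (r n k : ℕ) (x : ℝ) :
    ((k + 1 : ℕ) : ℝ) ^ (n + r) * x ^ (k + 1) / ((k + 1).factorial : ℝ) ^ r =
      x * ∑ j ∈ range (n + 1), (n.choose j : ℝ) * ((k : ℝ) ^ j * x ^ k / (k.factorial : ℝ) ^ r) := by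
  have hbinom : ((k : ℝ) + 1) ^ n = ∑ j ∈ range (n + 1), (k : ℝ) ^ j * (n.choose j : ℝ) := by
    simpa using add_pow (k : ℝ) 1 n
  have hfactor : ∑ j ∈ range (n + 1), (n.choose j : ℝ) * ((k : ℝ) ^ j * x ^ k / (k.factorial : ℝ) ^ r)
      = ((k : ℝ) + 1) ^ n * (x ^ k / (k.factorial : ℝ) ^ r) := by
    rw [hbinom, sum_mul]
    exact sum_congr rfl fun j _ => by ring
  rw [hfactor, Nat.factorial_succ]
  push_cast
  rw [pow_add, mul_pow]
  field_simp
  ring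

theorem factorialPowSeries_add {r : ℕ} (hr : 1 ≤ r) (x : ℝ) (n : ℕ) :
    factorialPowSeries r (n + r) x =
      x * ∑ j ∈ range (n + 1), (n.choose j : ℝ) * factorialPowSeries r j x := by
  have hsum := summable_pow_mul_pow_div_factorial_pow hr x
  rw [factorialPowSeries, (hsum (n + r)).tsum_eq_zero_add, tsum_congr
    (pow_mul_pow_div_factorial_pow_succ r n · x), tsum_mul_left,
    Summable.tsum_finsetSum fun j _ => (hsum j).mul_left _]
  simp [zero_pow (show n + r ≠ 0 by omega), factorialPowSeries, tsum_mul_left]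

/-- `D_r(n; x) = ∑_{j=0}^{r-1} b_{r,j}(n; x) · D_r(j; x)`, where the coefficients
`b j n = b_{r,j}(n; x)` satisfy `b_{r,j}(n;x) = δ_{j,n}` for `0 ≤ n ≤ r-1` and the
recurrence `b_{r,j}(n+r; x) = x ∑_{k=0}^n C(n,k) b_{r,j}(k; x)`. -/
theorem stmt_3 (r : ℕ) (hr : 1 ≤ r) (x : ℝ) (b : ℕ → ℕ → ℝ)
    (hbinit : ∀ j n : ℕ, n ≤ r - 1 → b j n = if j = n then 1 else 0)
    (hbrec : ∀ j n : ℕ, b j (n + r) = x * ∑ k ∈ Finset.range (n + 1), (n.choose k : ℝ) * b j k)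
    (n : ℕ) :
    ∑' k : ℕ, (k : ℝ) ^ n * x ^ k / (k.factorial : ℝ) ^ r =
      ∑ j ∈ Finset.range r, b j n *
        (∑' k : ℕ, (k : ℝ) ^ j * x ^ k / (k.factorial : ℝ) ^ r) := by
  refine eq_sum_mul_of_linear_recurrence hr (fun n k => x * n.choose k) b
    (factorialPowSeries r · x) (fun j n hn => hbinit j n (by omega)) (fun j n => ?_)
    (fun n => ?_) n
  · simp only [hbrec, mul_sum, mul_assoc]
  · simp only [factorialPowSeries_add hr, mul_sum, mul_assoc]
end

section
/- For every prime p and integers r ≥ 1, n ≥ 0, the sum S_r^{(p)}(n) := Σ_{k=0}^{p-1} k^n / (k!)^r, computed in the field ℤ/pℤ (where k! is invertible for 0 ≤ k ≤ p−1), satisfies S_r^{(p)}(n+r) ≡ Σ_{k=0}^n C(n,k) S_r^{(p)}(k) + (−1)^{r−1} δ_{n,0} (mod p). -/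
/-!
Since `k^(n+r) / (k!)^r = k^n / ((k-1)!)^r` for `1 ≤ k ≤ p - 1`, the index shift `k ↦ k + 1`
turns `S(n+r)` into `∑_{k=0}^{p-2} (k+1)^n / (k!)^r`. Extending this sum to `k = p - 1` adds
`p^n / ((p-1)!)^r = δ_{n,0} (-1)^r` by Wilson's theorem, and expanding `(k+1)^n` binomially
over the full range gives `∑_i C(n,i) S(i)`.
-/

open Finset

theorem sum_add_one_pow_div_eq_sum_choose {K ι : Type*} [Semifield K] (s : Finset ι)
    (x w : ι → K) (n : ℕ) :
    ∑ k ∈ s, (x k + 1) ^ n / w k =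
      ∑ i ∈ range (n + 1), (n.choose i : K) * ∑ k ∈ s, x k ^ i / w k := by
  simp_rw [add_pow, one_pow, mul_one, sum_div, mul_sum]
  rw [sum_comm]
  refine sum_congr rfl fun i _ => sum_congr rfl fun k _ => ?_
  ring

theorem natCast_succ_pow_add_div_factorial_pow {K : Type*} [Field K] {k : ℕ}
    (hk : ((k + 1 : ℕ) : K) ≠ 0) (n r : ℕ) :
    ((k + 1 : ℕ) : K) ^ (n + r) / ((k + 1).factorial : K) ^ r =
      ((k : K) + 1) ^ n / (k.factorial : K) ^ r := by
  rw [Nat.factorial_succ, Nat.cast_mul, mul_pow, pow_add, mul_comm (_ ^ n),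
    mul_div_mul_left _ _ (pow_ne_zero r hk), Nat.cast_succ]

theorem sum_range_succ_pow_add_div_factorial_pow {K : Type*} [Field K] {N n r : ℕ}
    (hN : ∀ k < N, ((k + 1 : ℕ) : K) ≠ 0) (hnr : n + r ≠ 0) :
    ∑ k ∈ range (N + 1), (k : K) ^ (n + r) / (k.factorial : K) ^ r =
      ∑ k ∈ range N, ((k : K) + 1) ^ n / (k.factorial : K) ^ r := by
  rw [sum_range_succ', Nat.cast_zero, zero_pow hnr, zero_div, add_zero]
  exact sum_congr rfl fun k hk =>
    natCast_succ_pow_add_div_factorial_pow (hN k (mem_range.mp hk)) n r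

theorem ZMod.sum_range_pow_add_div_factorial_pow (p : ℕ) [Fact p.Prime] {r : ℕ} (hr : 1 ≤ r)
    (n : ℕ) :
    ∑ k ∈ range p, (k : ZMod p) ^ (n + r) / (k.factorial : ZMod p) ^ r =
      ∑ k ∈ range p, ((k : ZMod p) + 1) ^ n / (k.factorial : ZMod p) ^ r
        + (if n = 0 then (-1) ^ (r - 1) else 0) := by
  obtain ⟨m, rfl⟩ : ∃ m, p = m + 1 :=
    ⟨p - 1, (Nat.succ_pred_eq_of_pos (Fact.out : p.Prime).pos).symm⟩
  obtain ⟨s, rfl⟩ : ∃ s, r = s + 1 := ⟨r - 1, by omega⟩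
  have hunit : ∀ k < m, ((k + 1 : ℕ) : ZMod (m + 1)) ≠ 0 := fun k hk => by
    rw [Ne, ZMod.natCast_eq_zero_iff]
    exact fun h => absurd (Nat.le_of_dvd k.succ_pos h) (by omega)
  have hlast : (m : ZMod (m + 1)) + 1 = 0 := by exact_mod_cast ZMod.natCast_self (m + 1)
  have hwilson : (m.factorial : ZMod (m + 1)) = -1 := ZMod.wilsons_lemma (m + 1)
  rw [sum_range_succ_pow_add_div_factorial_pow hunit (by omega), sum_range_succ, hlast, hwilson,
    Nat.add_sub_cancel, add_assoc, left_eq_add]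
  rcases neg_one_pow_eq_or (ZMod (m + 1)) s with h | h <;>
    split_ifs with hn <;> simp [hn, pow_succ, h]

/-- Mod-`p` recurrence for `S_r^{(p)}(n) = ∑_{k=0}^{p-1} k^n / (k!)^r` in `ℤ/pℤ`:
`S_r^{(p)}(n+r) = ∑_{k=0}^n C(n,k) S_r^{(p)}(k) + (-1)^{r-1} δ_{n,0}`. -/
theorem stmt_4 (p : ℕ) [Fact p.Prime] (r n : ℕ) (hr : 1 ≤ r) :
    ∑ k ∈ Finset.range p, (k : ZMod p) ^ (n + r) / (k.factorial : ZMod p) ^ r =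
      (∑ k ∈ Finset.range (n + 1), (n.choose k : ZMod p) *
          (∑ j ∈ Finset.range p, (j : ZMod p) ^ k / (j.factorial : ZMod p) ^ r))
        + (if n = 0 then (-1) ^ (r - 1) else 0) := by
  rw [ZMod.sum_range_pow_add_div_factorial_pow p hr,
    sum_add_one_pow_div_eq_sum_choose (range p) (fun k => (k : ZMod p))]
end

section
/- For every odd prime p and every integer n ≥ 0, Σ_{k=0}^{p-1} k^n / k! ≡ b(n) · Σ_{k=0}^{p-1} 1/k! + g(n) (mod p), where b(n) are the Bell numbers and g(n) is defined by g(0) = 0, g(1) = 1, and g(n+1) = Σ_{k=0}^n C(n,k) g(k) for n ≥ 1. -/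
/-!
Write `S m = ∑_{k<p} k^m / k!` in `ℤ/pℤ`. Cancelling `k` against `k!` and shifting the index gives
`S (m+1) = ∑_{j<p} (j+1)^m / j!` up to the term `j = p - 1`, which by Wilson's theorem
`(p-1)! = -1` contributes exactly `-0^m`; expanding `(j+1)^m` binomially then yields
`S (m+1) = ∑_i C(m,i) S i + 0^m`. The sequence `b n * S 0 + g n` satisfies the same recurrence
with the same initial value, because the Bell numbers satisfy it without the `0^m` term and `g`
with it, so the two sequences agree.
-/

open Finset Nat

section BinomialRecurrence

variable {R : Type*} [CommSemiring R]

def IsBinomialRecurrent (c x : ℕ → R) : Prop :=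
  ∀ n, x (n + 1) = ∑ i ∈ range (n + 1), (n.choose i : R) * x i + c n

theorem IsBinomialRecurrent.eq {c x y : ℕ → R} (hx : IsBinomialRecurrent c x)
    (hy : IsBinomialRecurrent c y) (h0 : x 0 = y 0) : x = y := by
  funext n
  induction n using Nat.strong_induction_on with
  | _ n ih =>
    cases n with
    | zero => exact h0
    | succ n =>
      rw [hx n, hy n]
      congr 1
      exact sum_congr rfl fun i hi => by rw [ih i (by simpa [Nat.lt_succ_iff] using hi)]

theorem IsBinomialRecurrent.mul_const_add {c x y : ℕ → R} (hx : IsBinomialRecurrent 0 x)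
    (hy : IsBinomialRecurrent c y) (a : R) :
    IsBinomialRecurrent c (fun n => x n * a + y n) := by
  intro n
  simp only [hx n, hy n, Pi.zero_apply, add_zero, mul_add, sum_add_distrib, sum_mul, mul_assoc]
  ring

end BinomialRecurrence

def dobinskiSum (K : Type*) [DivisionSemiring K] (N m : ℕ) : K :=
  ∑ k ∈ range N, (k : K) ^ m / (k ! : K)

theorem sum_add_one_pow_div {ι K : Type*} [Semifield K] (s : Finset ι) (x w : ι → K) (m : ℕ) :
    ∑ j ∈ s, (x j + 1) ^ m / w j =
      ∑ i ∈ range (m + 1), (m.choose i : K) * ∑ j ∈ s, x j ^ i / w j := by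
  simp only [add_pow, one_pow, mul_one, sum_div, mul_sum]
  rw [sum_comm]
  exact sum_congr rfl fun j _ => sum_congr rfl fun i _ => by ring

theorem dobinskiSum_succ_succ {K : Type*} [Field K] (N m : ℕ)
    (h : ∀ j < N, (j : K) + 1 ≠ 0) :
    dobinskiSum K (N + 1) (m + 1) = ∑ j ∈ range N, ((j : K) + 1) ^ m / (j ! : K) := by
  rw [dobinskiSum, sum_range_succ', Nat.cast_zero, zero_pow m.succ_ne_zero, zero_div, add_zero]
  refine sum_congr rfl fun j hj => ?_
  rw [factorial_succ, Nat.cast_mul, Nat.cast_succ, _root_.pow_succ', mul_div_mul_left _ _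
    (h j (mem_range.mp hj))]

theorem dobinskiSum_isBinomialRecurrent (p : ℕ) [Fact p.Prime] :
    IsBinomialRecurrent (fun m => (0 : ZMod p) ^ m) (dobinskiSum (ZMod p) p) := by
  intro m
  obtain ⟨q, rfl⟩ : ∃ q, p = q + 1 := ⟨p - 1, (succ_pred_eq_of_pos (Fact.out : p.Prime).pos).symm⟩
  have hunit : ∀ j < q, (j : ZMod (q + 1)) + 1 ≠ 0 := fun j hj => by
    rw [← Nat.cast_succ, Ne, ZMod.natCast_eq_zero_iff]
    exact Nat.not_dvd_of_pos_of_lt j.succ_pos (by omega)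
  have hlast : (q : ZMod (q + 1)) + 1 = 0 := by
    rw [← Nat.cast_succ, ZMod.natCast_self]
  have hwilson : (q ! : ZMod (q + 1)) = -1 := ZMod.wilsons_lemma (p := q + 1)
  have hshift := sum_add_one_pow_div (range (q + 1)) (fun j => (j : ZMod (q + 1)))
    (fun j => (j ! : ZMod (q + 1))) m
  rw [sum_range_succ, hlast, hwilson, div_neg, div_one] at hshift
  rw [dobinskiSum_succ_succ q m hunit]
  simp only [dobinskiSum, ← hshift]
  ring

theorem stmt_5_general (p : ℕ) [Fact p.Prime]
    (b : ℕ → ℕ) (hb0 : b 0 = 1)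
    (hb : ∀ n : ℕ, b (n + 1) = ∑ k ∈ Finset.range (n + 1), n.choose k * b k)
    (g : ℕ → ℕ) (hg0 : g 0 = 0) (hg1 : g 1 = 1)
    (hg : ∀ n : ℕ, 1 ≤ n → g (n + 1) = ∑ k ∈ Finset.range (n + 1), n.choose k * g k)
    (n : ℕ) :
    ∑ k ∈ Finset.range p, (k : ZMod p) ^ n / (k.factorial : ZMod p) =
      (b n : ZMod p) * (∑ k ∈ Finset.range p, 1 / (k.factorial : ZMod p)) + (g n : ZMod p) := by
  have hbell : IsBinomialRecurrent 0 (fun n => (b n : ZMod p)) := fun n => by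
    simp [hb n]
  have hgrec : IsBinomialRecurrent (fun n => (0 : ZMod p) ^ n) (fun n => (g n : ZMod p))
    | 0 => by simp [hg0, hg1]
    | n + 1 => by simp [hg (n + 1) (le_add_left 1 n)]
  have hdob := (dobinskiSum_isBinomialRecurrent p).eq (hbell.mul_const_add hgrec _)
    (by simp [hb0, hg0] : dobinskiSum (ZMod p) p 0 = b 0 * dobinskiSum (ZMod p) p 0 + g 0)
  simpa [dobinskiSum] using congrFun hdob n

/-- Finite analogue of Dobiński's formula: for an odd prime `p`,
`∑_{k=0}^{p-1} k^n/k! ≡ b(n) ∑_{k=0}^{p-1} 1/k! + g(n) (mod p)`, where `b` are the Bell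
numbers and `g(0)=0, g(1)=1` with the same binomial recurrence for `n ≥ 1`. -/
theorem stmt_5 (p : ℕ) [Fact p.Prime] (hodd : Odd p)
    (b : ℕ → ℕ) (hb0 : b 0 = 1)
    (hb : ∀ n : ℕ, b (n + 1) = ∑ k ∈ Finset.range (n + 1), n.choose k * b k)
    (g : ℕ → ℕ) (hg0 : g 0 = 0) (hg1 : g 1 = 1)
    (hg : ∀ n : ℕ, 1 ≤ n → g (n + 1) = ∑ k ∈ Finset.range (n + 1), n.choose k * g k)
    (n : ℕ) :
    ∑ k ∈ Finset.range p, (k : ZMod p) ^ n / (k.factorial : ZMod p) =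
      (b n : ZMod p) * (∑ k ∈ Finset.range p, 1 / (k.factorial : ZMod p)) + (g n : ZMod p) :=
  stmt_5_general p b hb0 hb g hg0 hg1 hg n
end

section
/- The functions E_j(z) := ϑ^j E(z) for j = 0, 1, ..., r−1, where E(z) = Σ_{n=0}^∞ z^{rn}/(n!)^r and ϑ = z·d/dz, are linearly independent over the field of rational functions ℂ(z). -/
/-!
Write `E = ∑ c_m z^m`, so `c_{rn} = (n!)^{-r}` and `c_m = 0` for `r ∤ m`. As `ϑ^j` multiplies
`c_m` by `m^j`, comparing Taylor coefficients in `∑_j P_j ϑ^j E = 0` (with `P_j = ∑_k p_{jk} z^k`)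
gives `∑_{j,k} p_{jk} (m-k)^j c_{m-k} = 0` for every `m`. Fix a residue `s` of `k` mod `r` and
take `m = s + rn`: only the `k = rt + s` contribute, and after multiplying by `(n!)^r` the
identity reads `Q(n) = 0` for all large `n`, where
`Q = ∑_{j,t} p_{j,rt+s} r^j (X - t)^j (X(X-1)⋯(X-t+1))^r`. Hence `Q = 0`; its summands are monic
of the pairwise distinct degrees `j + rt` (as `j < r`), so every `p_{j,rt+s}` vanishes.
-/

open Finset Polynomial

namespace SiegelE

def EntireCoeffs (a : ℕ → ℂ) : Prop :=
  ∀ R : ℝ, 0 ≤ R → Summable fun m => ‖a m‖ * R ^ m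

noncomputable def series (a : ℕ → ℂ) (z : ℂ) : ℂ :=
  ∑' m, a m * z ^ m

noncomputable def shift (k : ℕ) (a : ℕ → ℂ) (m : ℕ) : ℂ :=
  if k ≤ m then a (m - k) else 0

noncomputable def mulCoeffs (N : ℕ) (p : ℂ[X]) (a : ℕ → ℂ) (m : ℕ) : ℂ :=
  ∑ k ∈ range N, p.coeff k * shift k a m

lemma shift_add (k : ℕ) (a : ℕ → ℂ) (n : ℕ) : shift k a (n + k) = a n := by
  simp [shift]

lemma shift_eq_zero_of_lt {k m : ℕ} (a : ℕ → ℂ) (h : m < k) : shift k a m = 0 := by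
  simp [shift, Nat.not_le.mpr h]

namespace EntireCoeffs

variable {a : ℕ → ℂ}

lemma summable (ha : EntireCoeffs a) (z : ℂ) : Summable fun m => a m * z ^ m :=
  .of_norm <| (ha ‖z‖ (norm_nonneg z)).congr fun m => by rw [norm_mul, norm_pow]

lemma const_mul (ha : EntireCoeffs a) (x : ℂ) : EntireCoeffs fun m => x * a m :=
  fun R hR => ((ha R hR).mul_left ‖x‖).congr fun m => by rw [norm_mul, mul_assoc]

lemma natCast_mul (ha : EntireCoeffs a) : EntireCoeffs fun m => (m : ℂ) * a m := by
  intro R hR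
  refine .of_nonneg_of_le (fun m => by positivity) (fun m => ?_) (ha (2 * R) (by linarith))
  have hm : (m : ℝ) ≤ 2 ^ m := by exact_mod_cast (Nat.lt_two_pow_self (n := m)).le
  calc ‖(m : ℂ) * a m‖ * R ^ m = (m : ℝ) * (‖a m‖ * R ^ m) := by
        rw [norm_mul, Complex.norm_natCast, mul_assoc]
    _ ≤ 2 ^ m * (‖a m‖ * R ^ m) := by gcongr
    _ = ‖a m‖ * (2 * R) ^ m := by ring

lemma natCast_pow_mul (ha : EntireCoeffs a) (j : ℕ) :
    EntireCoeffs fun m => (m : ℂ) ^ j * a m := by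
  induction j with
  | zero => simpa using ha
  | succ j ih => simpa only [pow_succ', mul_assoc] using ih.natCast_mul

lemma shift (ha : EntireCoeffs a) (k : ℕ) : EntireCoeffs (shift k a) := by
  intro R hR
  have hvanish : ∀ m ∉ Set.range (· + k), ‖SiegelE.shift k a m‖ * R ^ m = 0 := fun m hm => by
    have hmk : m < k := by by_contra! h; exact hm ⟨m - k, Nat.sub_add_cancel h⟩
    rw [shift_eq_zero_of_lt a hmk, norm_zero, zero_mul]
  rw [← (add_left_injective k).summable_iff hvanish]
  refine ((ha R hR).mul_left (R ^ k)).congr fun m => ?_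
  simp only [Function.comp_apply, shift_add, pow_add]
  ring

lemma sum {ι : Type*} (s : Finset ι) {f : ι → ℕ → ℂ} (hf : ∀ i ∈ s, EntireCoeffs (f i)) :
    EntireCoeffs fun m => ∑ i ∈ s, f i m := by
  intro R hR
  refine .of_nonneg_of_le (fun m => by positivity) (fun m => ?_)
    (summable_sum fun i hi => hf i hi R hR)
  rw [← Finset.sum_mul]
  gcongr
  exact norm_sum_le s _

lemma mulCoeffs (ha : EntireCoeffs a) (N : ℕ) (p : ℂ[X]) : EntireCoeffs (mulCoeffs N p a) :=
  sum _ fun k _ => (ha.shift k).const_mul _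

lemma hasDerivAt_series (ha : EntireCoeffs a) (z : ℂ) :
    HasDerivAt (series a) (∑' m, a m * ((m : ℂ) * z ^ (m - 1))) z := by
  set R : ℝ := ‖z‖ + 1
  have hR : 1 ≤ R := by simp [R]
  have hu : Summable fun m : ℕ => ‖(m : ℂ) * a m‖ * R ^ m := ha.natCast_mul R (by positivity)
  refine hasDerivAt_tsum_of_isPreconnected hu Metric.isOpen_ball
    (convex_ball (0 : ℂ) R).isPreconnected (fun m y _ => (hasDerivAt_pow m y).const_mul (a m))
    (fun m y hy => ?_) (Metric.mem_ball_self (by positivity)) (ha.summable 0)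
    (mem_ball_zero_iff.mpr (by simp [R]))
  have hy : ‖y‖ ≤ R := (mem_ball_zero_iff.mp hy).le
  calc ‖a m * ((m : ℂ) * y ^ (m - 1))‖ = ‖(m : ℂ) * a m‖ * ‖y‖ ^ (m - 1) := by
        rw [norm_mul, norm_mul, norm_mul, norm_pow]; ring
    _ ≤ ‖(m : ℂ) * a m‖ * R ^ m := by
        gcongr
        exact (pow_le_pow_left₀ (norm_nonneg y) hy _).trans (pow_le_pow_right₀ hR (m.sub_le 1))

lemma eq_zero_of_series_eq_zero (ha : EntireCoeffs a) (h : ∀ z, series a z = 0) : a = 0 := by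
  have hp : HasFPowerSeriesAt (fun _ => (0 : ℂ)) (FormalMultilinearSeries.ofScalars ℂ a) 0 := by
    rw [hasFPowerSeriesAt_iff]
    filter_upwards with z
    have hsum := (ha.summable z).hasSum
    rw [show ∑' m, a m * z ^ m = series a z from rfl, h z] at hsum
    refine hsum.congr_fun fun n => ?_
    rw [FormalMultilinearSeries.coeff_ofScalars, smul_eq_mul, mul_comm]
  funext m
  rw [← FormalMultilinearSeries.coeff_ofScalars (p := a), hp.eq_zero]
  simp [FormalMultilinearSeries.coeff_eq_zero]

end EntireCoeffs

variable {a : ℕ → ℂ}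

lemma theta_series (ha : EntireCoeffs a) :
    (fun w => w * deriv (series a) w) = series fun m => (m : ℂ) * a m := by
  funext z
  rw [(ha.hasDerivAt_series z).deriv, ← tsum_mul_left]
  refine tsum_congr fun m => ?_
  cases m with
  | zero => simp
  | succ k => simp only [Nat.add_sub_cancel, pow_succ]; push_cast; ring

lemma theta_iterate_series (ha : EntireCoeffs a) (j : ℕ) :
    (fun f : ℂ → ℂ => fun w => w * deriv f w)^[j] (series a)
      = series fun m => (m : ℂ) ^ j * a m := by
  induction j with
  | zero => simp
  | succ j ih =>
    rw [Function.iterate_succ_apply', ih, theta_series (ha.natCast_pow_mul j)]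
    simp only [pow_succ', mul_assoc]

lemma series_shift (k : ℕ) (z : ℂ) :
    series (shift k a) z = z ^ k * series a z := by
  have hsupp : Function.support (fun m => shift k a m * z ^ m) ⊆ Set.range (· + k) :=
    fun m hm => ⟨m - k, Nat.sub_add_cancel (by by_contra h; exact hm (by simp [shift, h]))⟩
  rw [series, series, ← tsum_mul_left, ← (add_left_injective k).tsum_eq hsupp]
  refine tsum_congr fun m => ?_
  simp only [shift_add, pow_add]
  ring

lemma sum_series {ι : Type*} (s : Finset ι) {f : ι → ℕ → ℂ} (hf : ∀ i ∈ s, EntireCoeffs (f i))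
    (z : ℂ) : ∑ i ∈ s, series (f i) z = series (fun m => ∑ i ∈ s, f i m) z := by
  simp only [series, Finset.sum_mul]
  exact (Summable.tsum_finsetSum fun i hi => (hf i hi).summable z).symm

lemma eval_mul_series (ha : EntireCoeffs a) {p : ℂ[X]} {N : ℕ} (hN : p.natDegree < N) (z : ℂ) :
    p.eval z * series a z = series (mulCoeffs N p a) z := by
  calc p.eval z * series a z = ∑ k ∈ range N, series (fun m => p.coeff k * shift k a m) z := by
        rw [eval_eq_sum_range' hN, Finset.sum_mul]
        refine Finset.sum_congr rfl fun k _ => ?_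
        rw [mul_assoc, ← series_shift, series, series, ← tsum_mul_left]
        simp only [mul_assoc]
    _ = series (mulCoeffs N p a) z :=
        sum_series _ (fun k _ => (ha.shift k).const_mul _) z

noncomputable def ECoeff (r m : ℕ) : ℂ :=
  if r ∣ m then (((m / r).factorial : ℂ) ^ r)⁻¹ else 0

lemma ECoeff_mul_left {r : ℕ} (hr : 0 < r) (n : ℕ) :
    ECoeff r (r * n) = ((n.factorial : ℂ) ^ r)⁻¹ := by
  simp [ECoeff, Nat.mul_div_cancel_left n hr]

lemma ECoeff_of_not_dvd {r m : ℕ} (h : ¬ r ∣ m) : ECoeff r m = 0 := by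
  simp [ECoeff, h]

lemma ECoeff_eq_zero_of_notMem_range {r m : ℕ} (h : m ∉ Set.range (r * ·)) : ECoeff r m = 0 :=
  ECoeff_of_not_dvd fun ⟨n, hn⟩ => h ⟨n, hn.symm⟩

lemma entireCoeffs_ECoeff {r : ℕ} (hr : 0 < r) : EntireCoeffs (ECoeff r) := by
  intro R hR
  have hvanish : ∀ m ∉ Set.range (r * ·), ‖ECoeff r m‖ * R ^ m = 0 := fun m hm => by
    rw [ECoeff_eq_zero_of_notMem_range hm, norm_zero, zero_mul]
  rw [← (mul_right_injective₀ hr.ne').summable_iff hvanish]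
  refine .of_nonneg_of_le (fun n => ?_) (fun n => ?_) (Real.summable_pow_div_factorial (R ^ r))
  · exact mul_nonneg (norm_nonneg _) (pow_nonneg hR _)
  have hfact : (1 : ℝ) ≤ n.factorial := by exact_mod_cast n.factorial_pos
  simp only [Function.comp_apply, ECoeff_mul_left hr, norm_inv, norm_pow, Complex.norm_natCast,
    pow_mul, inv_mul_eq_div]
  gcongr
  exact le_self_pow₀ hfact hr.ne'

lemma series_ECoeff {r : ℕ} (hr : 0 < r) :
    (fun w : ℂ => ∑' n : ℕ, w ^ (r * n) / (n.factorial : ℂ) ^ r) = series (ECoeff r) := by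
  funext w
  have hsupp : Function.support (fun m => ECoeff r m * w ^ m) ⊆ Set.range (r * ·) :=
    fun m hm => by_contra fun h => hm (by simp [ECoeff_eq_zero_of_notMem_range h])
  rw [series, ← (mul_right_injective₀ hr.ne').tsum_eq hsupp]
  simp only [ECoeff_mul_left hr, inv_mul_eq_div]

lemma eq_zero_of_eval_natCast_eq_zero {R : Type*} [CommRing R] [IsDomain R] [CharZero R]
    {p : R[X]} (N : ℕ) (h : ∀ n, N ≤ n → p.eval (n : R) = 0) : p = 0 :=
  p.eq_zero_of_infinite_isRoot <| Set.infinite_of_injective_forall_mem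
    (f := fun n : ℕ => ((n + N : ℕ) : R)) (Nat.cast_injective.comp (add_left_injective N))
    fun n => h _ (Nat.le_add_left N n)

lemma eq_zero_of_sum_C_mul_eq_zero {ι K : Type*} [Field K] (s : Finset ι) (c : ι → K)
    (f : ι → K[X]) (hf : ∀ i ∈ s, f i ≠ 0) (hdeg : Set.InjOn (fun i => (f i).natDegree) s)
    (h : ∑ i ∈ s, C (c i) * f i = 0) : ∀ i ∈ s, c i = 0 := by
  have hdisj : Set.Pairwise {i | i ∈ s ∧ C (c i) * f i ≠ 0}
      (Function.onFun Ne (degree ∘ fun i => C (c i) * f i)) := by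
    rintro i ⟨hi, hci⟩ i' ⟨hi', hci'⟩ hne
    rw [Ne, mul_eq_zero, C_eq_zero, not_or] at hci hci'
    simp only [Function.onFun, Function.comp_apply, degree_C_mul hci.1, degree_C_mul hci'.1,
      degree_eq_natDegree (hf i hi), degree_eq_natDegree (hf i' hi'), Ne, Nat.cast_inj]
    exact fun hdeg' => hne (hdeg hi hi' hdeg')
  have hsup := degree_sum_eq_of_disjoint _ s hdisj
  rw [h, degree_zero, eq_comm, Finset.sup_eq_bot_iff] at hsup
  intro i hi
  have hi' := hsup i hi
  rw [degree_eq_bot, mul_eq_zero, C_eq_zero] at hi'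
  exact hi'.resolve_right (hf i hi)

noncomputable def weightPoly (r j t : ℕ) : ℂ[X] :=
  (X - C (t : ℂ)) ^ j * descPochhammer ℂ t ^ r

lemma weightPoly_monic (r j t : ℕ) : (weightPoly r j t).Monic :=
  ((monic_X_sub_C _).pow j).mul ((monic_descPochhammer ℂ t).pow r)

lemma natDegree_weightPoly (r j t : ℕ) : (weightPoly r j t).natDegree = j + r * t := by
  rw [weightPoly, ((monic_X_sub_C _).pow j).natDegree_mul ((monic_descPochhammer ℂ t).pow r),
    natDegree_pow, natDegree_pow, natDegree_X_sub_C, descPochhammer_natDegree, mul_one]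

lemma eval_weightPoly (r j t n : ℕ) :
    (weightPoly r j t).eval (n : ℂ) = ((n : ℂ) - t) ^ j * (n.descFactorial t : ℂ) ^ r := by
  simp [weightPoly, descPochhammer_eval_eq_descFactorial]

lemma natDegree_weightPoly_injOn {r : ℕ} (hr : 0 < r) (s : ℕ) :
    Set.InjOn (fun x : Fin r × ℕ => (weightPoly r x.1 (x.2 / r)).natDegree)
      {x | x.2 % r = s} := by
  rintro x (hx : x.2 % r = s) y (hy : y.2 % r = s) hxy
  simp only [natDegree_weightPoly] at hxy
  have hfst : (x.1 : ℕ) = y.1 := by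
    simpa [Nat.add_mul_mod_self_left, Nat.mod_eq_of_lt x.1.isLt, Nat.mod_eq_of_lt y.1.isLt]
      using congrArg (· % r) hxy
  have hdiv : x.2 / r = y.2 / r := Nat.eq_of_mul_eq_mul_left hr (by omega)
  have hsnd : x.2 = y.2 := by
    rw [← Nat.div_add_mod x.2 r, ← Nat.div_add_mod y.2 r, hdiv, hx, hy]
  exact Prod.ext (Fin.ext hfst) hsnd

lemma factorial_pow_mul_shift {r s k n : ℕ} (hr : 0 < r) (hs : s < r) (hk : k ≤ r * n) (j : ℕ) :
    (n.factorial : ℂ) ^ r * shift k (fun q => (q : ℂ) ^ j * ECoeff r q) (s + r * n) =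
      if k % r = s then (r : ℂ) ^ j * (weightPoly r j (k / r)).eval (n : ℂ) else 0 := by
  have hkm : k ≤ s + r * n := by omega
  rw [shift, if_pos hkm]
  split_ifs with hks
  · set t := k / r
    have hkt : k = s + r * t := by rw [← hks]; exact (Nat.mod_add_div k r).symm
    have htn : t ≤ n := Nat.le_of_mul_le_mul_left (by omega) hr
    have hsub : s + r * n - k = r * (n - t) := by rw [Nat.mul_sub]; omega
    have hfact : ((n - t).factorial : ℂ) * n.descFactorial t = n.factorial := by
      exact_mod_cast Nat.factorial_mul_descFactorial htn
    have hfact0 : ((n - t).factorial : ℂ) ≠ 0 := Nat.cast_ne_zero.mpr (Nat.factorial_ne_zero _)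
    rw [hsub, ECoeff_mul_left hr, eval_weightPoly, ← hfact]
    push_cast [Nat.cast_sub htn]
    rw [mul_pow, mul_pow]
    field_simp
  · have hndvd : ¬ r ∣ s + r * n - k := fun hdvd => hks <| by
      have hmod : k % r = (s + r * n) % r := (Nat.modEq_iff_dvd' hkm).mpr hdvd
      rwa [Nat.add_mul_mod_self_left, Nat.mod_eq_of_lt hs] at hmod
    rw [ECoeff_of_not_dvd hndvd, mul_zero, mul_zero]

lemma coeff_eq_zero_of_mulCoeffs_ECoeff {r N : ℕ} (hr : 0 < r) (P : Fin r → ℂ[X])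
    (h : ∀ m, ∑ j, mulCoeffs N (P j) (fun q => (q : ℂ) ^ (j : ℕ) * ECoeff r q) m = 0)
    (j : Fin r) {k : ℕ} (hk : k < N) : (P j).coeff k = 0 := by
  set s := k % r
  set T := (univ ×ˢ range N).filter fun x : Fin r × ℕ => x.2 % r = s
  set Q : ℂ[X] :=
    ∑ x ∈ T, C ((P x.1).coeff x.2 * (r : ℂ) ^ (x.1 : ℕ)) * weightPoly r x.1 (x.2 / r)
  -- the coefficient of `z ^ (s + r * n)`, multiplied by `(n!) ^ r`, is `Q(n)`
  have hQ : ∀ n, N ≤ n → Q.eval (n : ℂ) = 0 := fun n hn => by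
    rw [← mul_zero ((n.factorial : ℂ) ^ r), ← h (s + r * n), eval_finsetSum, sum_filter,
      sum_product, mul_sum]
    refine sum_congr rfl fun i _ => ?_
    rw [mulCoeffs, mul_sum]
    refine sum_congr rfl fun l hl => ?_
    have hl : l ≤ r * n := (mem_range.mp hl).le.trans (hn.trans (Nat.le_mul_of_pos_left n hr))
    rw [mul_left_comm, factorial_pow_mul_shift hr (Nat.mod_lt k hr) hl]
    split_ifs
    · rw [eval_mul, eval_C]; ring
    · rw [mul_zero]
  have hT := eq_zero_of_sum_C_mul_eq_zero T _ _ (fun x _ => (weightPoly_monic _ _ _).ne_zero)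
    ((natDegree_weightPoly_injOn hr s).mono fun x hx => (mem_filter.mp hx).2)
    (eq_zero_of_eval_natCast_eq_zero N hQ) (j, k) (by simp [T, s, hk])
  simpa [hr.ne'] using hT

end SiegelE

open SiegelE in
/-- The functions `E_j = ϑ^j E`, `0 ≤ j ≤ r-1`, where `E(z) = ∑ z^{rn}/(n!)^r` and `ϑ = z d/dz`,
are linearly independent over `ℂ(z)`: if polynomials `p_j` satisfy `∑_j p_j(z) E_j(z) = 0`
identically, then all `p_j = 0`. -/
theorem stmt_8 (r : ℕ) (hr : 1 ≤ r) (P : Fin r → Polynomial ℂ)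
    (h : ∀ z : ℂ, ∑ j : Fin r, (P j).eval z *
        ((fun f : ℂ → ℂ => fun w => w * deriv f w)^[(j : ℕ)]
          (fun w : ℂ => ∑' n : ℕ, w ^ (r * n) / (n.factorial : ℂ) ^ r)) z = 0) :
    ∀ j : Fin r, P j = 0 := by
  obtain ⟨N, hN⟩ : ∃ N, ∀ j, (P j).natDegree < N :=
    ⟨univ.sup (fun j => (P j).natDegree) + 1,
      fun j => Nat.lt_succ_of_le (le_sup (f := fun j => (P j).natDegree) (mem_univ j))⟩
  have hE : ∀ j : ℕ, EntireCoeffs fun q => (q : ℂ) ^ j * ECoeff r q :=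
    (entireCoeffs_ECoeff hr).natCast_pow_mul
  have hcoeffs := (EntireCoeffs.sum univ fun (j : Fin r) _ => (hE j).mulCoeffs N (P j))
    |>.eq_zero_of_series_eq_zero fun z => by
      rw [← sum_series _ (fun (j : Fin r) _ => (hE j).mulCoeffs N (P j)), ← h z]
      refine sum_congr rfl fun j _ => ?_
      rw [series_ECoeff hr, theta_iterate_series (entireCoeffs_ECoeff hr),
        eval_mul_series (hE j) (hN j)]
  intro j
  ext k
  by_cases hk : k < N
  · exact coeff_eq_zero_of_mulCoeffs_ECoeff hr P (congrFun hcoeffs) j hk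
  · exact coeff_eq_zero_of_natDegree_lt (by have := hN j; omega)
end

section
/- The Gregory polynomials defined by the generating function t(1+t)^x / log(1+t) = Σ_{n=0}^∞ G_n(x) t^n satisfy G_n(x) = ∫_x^{x+1} C(u, n) du for all n ≥ 0, where C(u,n) = u(u−1)···(u−n+1)/n! is the generalized binomial coefficient polynomial. -/
/-!
Expanding `(1 + t) ^ u = ∑ C(u, n) t ^ n` and integrating termwise over `u ∈ [x, x + 1]` gives
`∑ (∫_x^{x+1} C(u, n) du) t ^ n = ∫_x^{x+1} (1 + t) ^ u du = t (1 + t) ^ x / log (1 + t)`.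
Termwise integration is justified by `|C(u, n)| ≤ C(M + n - 1, n)` for `|u| ≤ M`, the
coefficients of the convergent series of `(1 - t) ^ (-M)`. Both `G n x` and these integrals are
then coefficients of power series with positive radius that agree on a punctured neighbourhood
of `0`, so they coincide by the identity theorem.
-/
open Filter Topology FormalMultilinearSeries

theorem Ring.choose_eq_prod_range_div {K : Type*} [Field K] [CharZero K] (a : K) (n : ℕ) :
    Ring.choose a n = (∏ i ∈ Finset.range n, (a - i)) / n.factorial := by
  rw [Ring.choose_eq_smul, ← Polynomial.aeval_eq_smeval, Polynomial.aeval_def,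
    Polynomial.eval₂_eq_eval_map, descPochhammer_map, descPochhammer_eval_eq_prod_range,
    smul_eq_mul, inv_mul_eq_div]

theorem abs_choose_le_choose_add_sub_one {u M : ℝ} (hu : |u| ≤ M) (n : ℕ) :
    |Ring.choose u n| ≤ Ring.choose (M + n - 1) n := by
  have hrev : ∏ i ∈ Finset.range n, (M + n - 1 - i) = ∏ i ∈ Finset.range n, (M + i) := by
    rw [← Finset.prod_range_reflect]
    refine Finset.prod_congr rfl fun i hi => ?_
    rw [Nat.cast_sub (by simp at hi; omega), Nat.cast_sub (by simp at hi; omega)]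
    push_cast; ring
  rw [Ring.choose_eq_prod_range_div, Ring.choose_eq_prod_range_div, abs_div, Nat.abs_cast,
    Finset.abs_prod, hrev]
  gcongr with i
  calc |u - i| ≤ |u| + |(i : ℝ)| := abs_sub _ _
    _ ≤ M + i := by rw [Nat.abs_cast]; linarith

theorem Real.hasSum_choose_mul_pow (a : ℝ) {y : ℝ} (hy : |y| < 1) :
    HasSum (fun n => Ring.choose a n * y ^ n) ((1 + y) ^ a) := by
  have := Real.one_add_rpow_hasFPowerSeriesOnBall_zero (a := a) |>.hasSum (y := y)
    (by simpa [← ofReal_norm] using hy)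
  simpa [binomialSeries, ofScalars_apply_eq, mul_comm] using this

theorem Real.summable_choose_add_sub_one_mul_pow (a : ℝ) {y : ℝ} (hy : |y| < 1) :
    Summable (fun n : ℕ => Ring.choose (a + (n : ℝ) - 1) n * y ^ n) := by
  have := Real.one_div_one_sub_rpow_hasFPowerSeriesOnBall_zero a |>.hasSum (y := y)
    (by simpa [← ofReal_norm] using hy)
  simpa [ofScalars_apply_eq, mul_comm] using this.summable

theorem hasSum_intervalIntegral_choose_mul_pow (a b : ℝ) {y : ℝ} (hy : |y| < 1) :
    HasSum (fun n => (∫ u in a..b, Ring.choose u n) * y ^ n) (∫ u in a..b, (1 + y) ^ u) := by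
  set M := |a| + |b|
  have hbound : ∀ u ∈ Set.uIoc a b, |u| ≤ M := by
    intro u hu
    rcases Set.mem_uIcc.mp (Set.uIoc_subset_uIcc hu) with ⟨h₁, h₂⟩ | ⟨h₁, h₂⟩ <;>
      exact abs_le.mpr ⟨by linarith [neg_abs_le a, neg_abs_le b, abs_nonneg a, abs_nonneg b],
        by linarith [le_abs_self a, le_abs_self b, abs_nonneg a, abs_nonneg b]⟩
  simp_rw [← intervalIntegral.integral_mul_const]
  refine intervalIntegral.hasSum_integral_of_dominated_convergence
    (fun n _ => Ring.choose (M + n - 1) n * |y| ^ n) (fun n => ?_) (fun n => ?_)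
    (.of_forall fun _ _ => Real.summable_choose_add_sub_one_mul_pow M (by rwa [abs_abs]))
    intervalIntegrable_const (.of_forall fun u _ => Real.hasSum_choose_mul_pow u hy)
  · have hcont : Continuous fun u : ℝ => Ring.choose u n := by
      simp_rw [Ring.choose_eq_prod_range_div]; fun_prop
    exact (hcont.mul continuous_const).aestronglyMeasurable
  · refine .of_forall fun u hu => ?_
    rw [norm_mul, norm_pow, Real.norm_eq_abs, Real.norm_eq_abs]
    gcongr
    exact abs_choose_le_choose_add_sub_one (hbound u hu) n

theorem integral_const_rpow {b : ℝ} (hb : 0 < b) (hb1 : b ≠ 1) (s t : ℝ) :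
    ∫ u in s..t, b ^ u = (b ^ t - b ^ s) / Real.log b := by
  have hlog : Real.log b ≠ 0 := Real.log_ne_zero_of_pos_of_ne_one hb hb1
  simp_rw [Real.rpow_def_of_pos hb]
  rw [intervalIntegral.integral_comp_mul_left Real.exp hlog, integral_exp, smul_eq_mul]
  field_simp

theorem radius_ofScalars_pos_of_summable {𝕜 : Type*} [NontriviallyNormedField 𝕜] {c : ℕ → 𝕜}
    {z : 𝕜} (hz : z ≠ 0) (h : Summable fun n => c n * z ^ n) : 0 < (ofScalars 𝕜 c).radius := by
  refine lt_of_lt_of_le ?_ (le_radius_of_tendsto _ (r := ‖z‖₊) (l := 0) ?_)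
  · simpa using hz
  · simpa [ofScalars_norm, norm_mul, norm_pow] using h.tendsto_atTop_zero.norm

theorem ofScalars_eq_of_frequently_tsum_eq {𝕜 : Type*} [NontriviallyNormedField 𝕜]
    [CompleteSpace 𝕜] {c d : ℕ → 𝕜} (hc : 0 < (ofScalars 𝕜 c).radius)
    (hd : 0 < (ofScalars 𝕜 d).radius)
    (h : ∃ᶠ z in 𝓝[≠] 0, ∑' n, c n * z ^ n = ∑' n, d n * z ^ n) : c = d := by
  have hsum : ∀ e : ℕ → 𝕜, (ofScalars 𝕜 e).sum = fun z => ∑' n, e n * z ^ n := fun e => by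
    ext z; simp [FormalMultilinearSeries.sum, mul_comm]
  have hcs := ((ofScalars 𝕜 c).hasFPowerSeriesOnBall hc).hasFPowerSeriesAt
  have hds := ((ofScalars 𝕜 d).hasFPowerSeriesOnBall hd).hasFPowerSeriesAt
  rw [hsum] at hcs hds
  have heq := (hcs.analyticAt.frequently_eq_iff_eventually_eq hds.analyticAt).mp h
  exact (ofScalars_series_eq_iff 𝕜 c d).mp
    (hcs.eq_formalMultilinearSeries (hds.congr (EventuallyEq.symm heq)))

noncomputable def gregory (n : ℕ) (x : ℝ) : ℝ := ∫ u in x..x + 1, Ring.choose u n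

theorem hasSum_gregory_mul_pow (x : ℝ) {t : ℝ} (ht0 : t ≠ 0) (ht : |t| < 1) :
    HasSum (fun n => gregory n x * t ^ n) (t * (1 + t) ^ x / Real.log (1 + t)) := by
  have h1t : 0 < 1 + t := by linarith [neg_abs_le t]
  have hint : ∫ u in x..x + 1, (1 + t) ^ u = t * (1 + t) ^ x / Real.log (1 + t) := by
    rw [integral_const_rpow h1t (by simpa using ht0), Real.rpow_add h1t, Real.rpow_one]
    ring
  exact hint ▸ hasSum_intervalIntegral_choose_mul_pow x (x + 1) ht

/-- The Gregory polynomials, defined by `t(1+t)^x / log(1+t) = ∑_n G_n(x) t^n` for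
`0 < |t| < 1`, satisfy `G_n(x) = ∫_x^{x+1} C(u, n) du`. -/
theorem stmt_10 (G : ℕ → ℝ → ℝ)
    (hG : ∀ x t : ℝ, 0 < |t| → |t| < 1 →
      t * (1 + t) ^ x / Real.log (1 + t) = ∑' n : ℕ, G n x * t ^ n)
    (n : ℕ) (x : ℝ) :
    G n x = ∫ u in x..(x + 1), (∏ i ∈ Finset.range n, (u - (i : ℝ))) / (n.factorial : ℝ) := by
  have hG_summable : Summable fun k => G k x * (1 / 2 : ℝ) ^ k := by
    have hpos : 0 < (1 / 2 : ℝ) * (1 + 1 / 2) ^ x / Real.log (1 + 1 / 2) := by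
      have := Real.log_pos (by norm_num : (1 : ℝ) < 1 + 1 / 2)
      positivity
    -- otherwise the `tsum` in `hG` would be the junk value `0`
    by_contra hns
    rw [hG x _ (by norm_num) (by norm_num), tsum_eq_zero_of_not_summable hns] at hpos
    exact hpos.false
  have hpunct : ∀ᶠ t in 𝓝[≠] (0 : ℝ), 0 < |t| ∧ |t| < 1 := by
    have hball : ∀ᶠ t in 𝓝[≠] (0 : ℝ), |t| < 1 :=
      nhdsWithin_le_nhds ((continuous_abs.tendsto' (0 : ℝ) 0 abs_zero).eventually_lt_const one_pos)
    filter_upwards [self_mem_nhdsWithin, hball] with t ht0 ht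
    exact ⟨abs_pos.mpr ht0, ht⟩
  have hGa : (fun k => G k x) = fun k => gregory k x := by
    refine ofScalars_eq_of_frequently_tsum_eq
      (radius_ofScalars_pos_of_summable (by norm_num) hG_summable)
      (radius_ofScalars_pos_of_summable (by norm_num)
        (hasSum_gregory_mul_pow x (t := 1 / 2) (by norm_num) (by norm_num)).summable)
      (hpunct.mono fun t ⟨ht0, ht⟩ => ?_).frequently
    rw [← hG x t ht0 ht, (hasSum_gregory_mul_pow x (abs_pos.mp ht0) ht).tsum_eq]
  rw [congrFun hGa n, gregory]
  simp_rw [Ring.choose_eq_prod_range_div]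
end

section
/- Eisenstein's congruence: for every odd prime p and integer x with x ≢ 0 and x+1 ≢ 0 (mod p), Σ_{m=1}^{p−1} (−1)^{m−1} x^m / m ≡ (x+1) q_p(x+1) − x q_p(x) (mod p), where q_p(y) = (y^{p−1} − 1)/p is the Fermat quotient. -/
/-!
Multiplying the right-hand side by `p` and using `p q_p(y) = y^(p-1) - 1` gives
`(x+1)^p - x^p - 1 = ∑_{0<m<p} C(p,m) x^m`, so it equals `∑_{0<m<p} (C(p,m)/p) x^m` in `ℤ`.
Finally `m · C(p,m)/p = C(p-1,m-1) ≡ (-1)^(m-1) (mod p)`.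
-/

open Finset

theorem add_one_pow_sub_pow_sub_one {R : Type*} [CommRing R] (x : R) {n : ℕ} (hn : 0 < n) :
    (x + 1) ^ n - x ^ n - 1 = ∑ m ∈ Icc 1 (n - 1), (n.choose m : R) * x ^ m := by
  obtain ⟨n, rfl⟩ : ∃ k, n = k + 1 := ⟨n - 1, by omega⟩
  rw [add_pow, sum_range_succ, sum_range_succ', Nat.add_sub_cancel, ← Ico_add_one_right_eq_Icc,
    sum_Ico_eq_sum_range, Nat.add_sub_cancel]
  simp [mul_comm, add_comm]

theorem Int.natCast_mul_pow_sub_one_sub_one_ediv {p : ℕ} (hp : p.Prime) {y : ℤ}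
    (hy : ¬ (p : ℤ) ∣ y) : (p : ℤ) * ((y ^ (p - 1) - 1) / p) = y ^ (p - 1) - 1 :=
  Int.mul_ediv_cancel' <| Int.prime_dvd_pow_sub_one hp <|
    ((Nat.prime_iff_prime_int.mp hp).coprime_iff_not_dvd.mpr hy).symm

theorem Int.sum_choose_div_mul_pow_eq {p : ℕ} (hp : p.Prime) {x : ℤ} (hx : ¬ (p : ℤ) ∣ x)
    (hx1 : ¬ (p : ℤ) ∣ (x + 1)) :
    ∑ m ∈ Icc 1 (p - 1), ((p.choose m / p : ℕ) : ℤ) * x ^ m =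
      (x + 1) * (((x + 1) ^ (p - 1) - 1) / p) - x * ((x ^ (p - 1) - 1) / p) := by
  apply mul_left_cancel₀ (Int.natCast_ne_zero.mpr hp.ne_zero)
  calc (p : ℤ) * ∑ m ∈ Icc 1 (p - 1), ((p.choose m / p : ℕ) : ℤ) * x ^ m
      = (x + 1) ^ p - x ^ p - 1 := by
        rw [add_one_pow_sub_pow_sub_one x hp.pos, mul_sum]
        refine sum_congr rfl fun m hm => ?_
        rw [mem_Icc] at hm
        rw [← mul_assoc, ← Nat.cast_mul,
          Nat.mul_div_cancel' (hp.dvd_choose_self (by omega) (by omega))]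
    _ = (x + 1) * (x + 1) ^ (p - 1) - x * x ^ (p - 1) - 1 := by
        rw [mul_pow_sub_one hp.ne_zero, mul_pow_sub_one hp.ne_zero]
    _ = (p : ℤ) * ((x + 1) * (((x + 1) ^ (p - 1) - 1) / p) - x * ((x ^ (p - 1) - 1) / p)) := by
        rw [mul_sub, mul_left_comm, mul_left_comm (p : ℤ) x,
          Int.natCast_mul_pow_sub_one_sub_one_ediv hp hx,
          Int.natCast_mul_pow_sub_one_sub_one_ediv hp hx1]
        ring

namespace ZMod

variable {p : ℕ} [Fact p.Prime]

theorem natCast_choose_pred_eq_neg_one_pow {k : ℕ} (hk : k < p) :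
    ((p - 1).choose k : ZMod p) = (-1) ^ k := by
  have hp : p.Prime := Fact.out
  induction k with
  | zero => simp
  | succ k ih =>
    have hpascal : (p - 1).choose k + (p - 1).choose (k + 1) = p.choose (k + 1) := by
      rw [← Nat.choose_succ_succ', Nat.sub_add_cancel hp.one_le]
    have hdvd : ((p.choose (k + 1) : ℕ) : ZMod p) = 0 :=
      (natCast_eq_zero_iff _ _).mpr (hp.dvd_choose_self k.succ_ne_zero hk)
    rw [← hpascal, Nat.cast_add, ih (by omega)] at hdvd
    rw [pow_succ]
    linear_combination hdvd

theorem natCast_choose_div_eq {m : ℕ} (hm0 : 0 < m) (hmp : m < p) :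
    ((p.choose m / p : ℕ) : ZMod p) = (-1) ^ (m - 1) / m := by
  have hp : p.Prime := Fact.out
  have hm : (m : ZMod p) ≠ 0 := by
    rw [Ne, natCast_eq_zero_iff]
    exact fun h => (Nat.le_of_dvd hm0 h).not_gt hmp
  have key : p.choose m / p * m = (p - 1).choose (m - 1) := by
    have := Nat.add_one_mul_choose_eq (p - 1) (m - 1)
    rw [Nat.sub_add_cancel hp.one_le, Nat.sub_add_cancel hm0] at this
    rw [Nat.div_mul_right_comm (hp.dvd_choose_self hm0.ne' hmp), ← this,
      Nat.mul_div_cancel_left _ hp.pos]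
  rw [eq_div_iff hm, ← natCast_choose_pred_eq_neg_one_pow (by omega), ← key, Nat.cast_mul]

theorem intCast_sum_choose_div_mul_pow (x : ℤ) :
    ((∑ m ∈ Icc 1 (p - 1), ((p.choose m / p : ℕ) : ℤ) * x ^ m : ℤ) : ZMod p) =
      ∑ m ∈ Icc 1 (p - 1), (-1 : ZMod p) ^ (m - 1) * (x : ZMod p) ^ m / (m : ZMod p) := by
  simp only [Int.cast_sum, Int.cast_mul, Int.cast_pow, Int.cast_natCast]
  refine sum_congr rfl fun m hm => ?_
  rw [mem_Icc] at hm
  rw [natCast_choose_div_eq (by omega) (by omega)]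
  ring

end ZMod

theorem stmt_16_general (p : ℕ) [Fact p.Prime] (x : ℤ)
    (hx : ¬ (p : ℤ) ∣ x) (hx1 : ¬ (p : ℤ) ∣ (x + 1)) :
    ∑ m ∈ Finset.Icc 1 (p - 1), (-1 : ZMod p) ^ (m - 1) * (x : ZMod p) ^ m / (m : ZMod p) =
      (((x + 1) * (((x + 1) ^ (p - 1) - 1) / (p : ℤ)) - x * ((x ^ (p - 1) - 1) / (p : ℤ)) : ℤ) :
        ZMod p) := by
  rw [← Int.sum_choose_div_mul_pow_eq Fact.out hx hx1, ZMod.intCast_sum_choose_div_mul_pow]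

/-- Eisenstein's congruence: for an odd prime `p` and an integer `x` with
`p ∤ x` and `p ∤ x+1`,
`∑_{m=1}^{p-1} (-1)^{m-1} x^m / m ≡ (x+1) q_p(x+1) - x q_p(x) (mod p)`,
where `q_p(y) = (y^{p-1} - 1)/p` is the Fermat quotient. -/
theorem stmt_16 (p : ℕ) [Fact p.Prime] (hodd : Odd p) (x : ℤ)
    (hx : ¬ (p : ℤ) ∣ x) (hx1 : ¬ (p : ℤ) ∣ (x + 1)) :
    ∑ m ∈ Finset.Icc 1 (p - 1), (-1 : ZMod p) ^ (m - 1) * (x : ZMod p) ^ m / (m : ZMod p) =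
      (((x + 1) * (((x + 1) ^ (p - 1) - 1) / (p : ℤ)) - x * ((x ^ (p - 1) - 1) / (p : ℤ)) : ℤ) :
        ZMod p) :=
  stmt_16_general p x hx hx1
end

section
/- For every sufficiently large prime p (p larger than the denominator and relevant numerators of x) and rational x with x, x+1, x+2 all p-adic units or p-adic integers with x+1, x+2 ≢ 0 mod p, the Gregory polynomial value satisfies G_{p−1}(x) − 1/p! ≡ −(x+2) q_p(x+2) + (x+1) q_p(x+1) + 1 (mod p), where q_p denotes the Fermat quotient. -/
/-!
Over `𝔽_p` one has `(X + 1) ∏_{i<p-1} (X - i) = X^p - X = (X + 1) ∑_{j=1}^{p-1} (-X)^j`, hence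
`s(p-1, j) ≡ 1`; moreover `(-1)^j / (j+1) ≡ binom(p, j+1) / p`. Put
`B(y) = ((y+1)^p - y^p - 1) / p = ∑_{k=1}^{p-1} (binom(p, k) / p) y^k`. The term `j = p - 1` of the
Gregory sum combines with `1/p!` into `B(x) / (p-1)!`, and modulo `p` the remaining terms add up to
`B(x+1) - B(x) - 1`. So `(p-1)! (G_{p-1}(x) - 1/p!) ≡ B(x+1) - 1`, and we conclude with Wilson's
theorem and the exact identity `(x+2) q_p(x+2) - (x+1) q_p(x+1) = B(x+1)`.
-/

open Finset Polynomial

section DescPochhammerZMod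

variable {p : ℕ} [Fact p.Prime]

theorem descPochhammer_zmod_prime : descPochhammer (ZMod p) p = X ^ p - X := by
  have hp : p.Prime := Fact.out
  have hD : IsMonicOfDegree (descPochhammer (ZMod p) p) p :=
    ⟨descPochhammer_natDegree _ p, monic_descPochhammer _ p⟩
  have hF : IsMonicOfDegree (X ^ p - X : (ZMod p)[X]) p :=
    (isMonicOfDegree_X_pow _ p).sub (by rw [natDegree_X]; exact hp.one_lt)
  refine (sub_eq_zero.1 <| eq_zero_of_natDegree_lt_card_of_eval_eq_zero _ Function.injective_id
    (fun a => ?_) ((hD.natDegree_sub_lt hp.ne_zero hF).trans_eq (ZMod.card p).symm))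
  rw [id, eval_sub, descPochhammer_eval_eq_prod_range, eval_sub, eval_pow, eval_X, ZMod.pow_card,
    sub_self, sub_eq_zero]
  exact prod_eq_zero (mem_range.2 a.val_lt) (by rw [ZMod.natCast_zmod_val, sub_self])

theorem X_add_one_mul_descPochhammer_zmod_pred :
    (X + 1) * descPochhammer (ZMod p) (p - 1) = X ^ p - X := by
  have hp : p.Prime := Fact.out
  have h := descPochhammer_succ_right (ZMod p) (p - 1)
  rw [Nat.sub_add_cancel hp.one_le, descPochhammer_zmod_prime, Nat.cast_pred hp.pos,
    CharP.cast_eq_zero] at h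
  rw [h]
  ring

theorem descPochhammer_zmod_pred :
    descPochhammer (ZMod p) (p - 1) = ∑ j ∈ Ico 1 p, (-X) ^ j := by
  have hp : p.Prime := Fact.out
  refine mul_left_cancel₀ (X_add_C_ne_zero 1) ?_
  rw [C_1, X_add_one_mul_descPochhammer_zmod_pred]
  have h := geom_sum_Ico_mul (-X : (ZMod p)[X]) hp.one_le
  rw [neg_pow (X : (ZMod p)[X]) p, neg_one_pow_char] at h
  linear_combination h

theorem coeff_descPochhammer_zmod_pred {j : ℕ} (hj : j ∈ Ico 1 p) :
    (descPochhammer (ZMod p) (p - 1)).coeff j = (-1) ^ j := by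
  have hterm : ∀ i, ((-X : (ZMod p)[X]) ^ i).coeff j = if j = i then (-1) ^ j else 0 := by
    intro i
    rw [neg_pow, ← C_1, ← C_neg, ← C_pow, coeff_C_mul_X_pow]
    split_ifs with h <;> simp [h]
  rw [descPochhammer_zmod_pred, finsetSum_coeff]
  simp [hterm, hj]

end DescPochhammerZMod

section Stirling

variable {s : ℕ → ℕ → ℕ}
  (hs : ∀ (n : ℕ) (u : ℚ), ∏ i ∈ range n, (u - (i : ℚ)) =
    ∑ j ∈ range (n + 1), (-1 : ℚ) ^ (n - j) * (s n j : ℚ) * u ^ j)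
include hs

theorem coeff_descPochhammer_int {n j : ℕ} (hj : j ≤ n) :
    (descPochhammer ℤ n).coeff j = (-1) ^ (n - j) * s n j := by
  have h : descPochhammer ℚ n =
      ∑ j ∈ range (n + 1), C ((-1) ^ (n - j) * (s n j : ℚ)) * X ^ j :=
    Polynomial.funext fun u => by simp [descPochhammer_eval_eq_prod_range, hs, eval_finsetSum]
  replace h := congrArg (coeff · j) h
  simp only [← descPochhammer_map (Int.castRingHom ℚ), coeff_map, finsetSum_coeff,
    coeff_C_mul_X_pow] at h
  simp [Nat.lt_succ_of_le hj] at h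
  exact_mod_cast h

theorem stirling_self (n : ℕ) : s n n = 1 := by
  have h := coeff_descPochhammer_int hs (le_refl n)
  have hmonic := (monic_descPochhammer ℤ n).coeff_natDegree
  rw [descPochhammer_natDegree, h, Nat.sub_self, pow_zero, one_mul] at hmonic
  exact_mod_cast hmonic

theorem cast_stirling_pred_prime {p : ℕ} [Fact p.Prime] {j : ℕ} (hj : j ∈ Ico 1 p) :
    (s (p - 1) j : ZMod p) = 1 := by
  have h := congrArg (coeff · j) (descPochhammer_map (Int.castRingHom (ZMod p)) (p - 1))
  rw [coeff_map, eq_intCast, coeff_descPochhammer_int hs (Nat.le_sub_one_of_lt (mem_Ico.1 hj).2),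
    coeff_descPochhammer_zmod_pred hj] at h
  push_cast at h
  calc (s (p - 1) j : ZMod p)
      = (-1) ^ (p - 1 - j) * ((-1) ^ (p - 1 - j) * s (p - 1) j) := by
        rw [← mul_assoc, ← pow_add, Even.neg_one_pow ⟨_, rfl⟩, one_mul]
    _ = (-1) ^ (p - 1) := by
        rw [h, ← pow_add, Nat.sub_add_cancel (Nat.le_sub_one_of_lt (mem_Ico.1 hj).2)]
    _ = 1 := ZMod.pow_card_sub_one_eq_one (neg_ne_zero.2 one_ne_zero)

end Stirling

section BinomialQuotient

variable {A B : Type*} [CommRing A] [CommRing B]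

/-- `((y + 1) ^ p - y ^ p - 1) / p`, written with the integral coefficients `binom(p, k) / p` so
that it makes sense in every commutative ring. -/
def binomialQuotient (p : ℕ) (y : A) : A :=
  ∑ k ∈ range (p - 1), ((p.choose (k + 1) / p : ℕ) : A) * y ^ (k + 1)

theorem map_binomialQuotient (f : A →+* B) (p : ℕ) (y : A) :
    f (binomialQuotient p y) = binomialQuotient p (f y) := by
  simp [binomialQuotient]

theorem prime_mul_binomialQuotient {p : ℕ} (hp : p.Prime) (y : A) :
    (p : A) * binomialQuotient p y = (y + 1) ^ p - y ^ p - 1 := by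
  have hdvd : ∀ k ∈ range (p - 1), p ∣ p.choose (k + 1) := fun k hk =>
    hp.dvd_choose_self k.succ_ne_zero (by have := mem_range.1 hk; omega)
  obtain ⟨n, rfl⟩ := Nat.exists_eq_add_one_of_ne_zero hp.ne_zero
  rw [add_pow, sum_range_succ, sum_range_succ', binomialQuotient, mul_sum]
  simp only [one_pow, mul_one, Nat.choose_self, Nat.choose_zero_right, Nat.cast_one, pow_zero,
    Nat.add_sub_cancel]
  rw [add_sub_cancel_right, add_sub_cancel_right]
  refine sum_congr rfl fun k hk => ?_
  rw [← mul_assoc, ← Nat.cast_mul, Nat.mul_div_cancel' (hdvd k hk), mul_comm]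

theorem binomialQuotient_add_one_sub {p : ℕ} (hp : 1 < p) (y : A) :
    binomialQuotient p (y + 1) - binomialQuotient p y =
      1 + ∑ j ∈ Ico 1 (p - 1),
        ((p.choose (j + 1) / p : ℕ) : A) * ((y + 1) ^ (j + 1) - y ^ (j + 1)) := by
  rw [binomialQuotient, binomialQuotient, ← sum_sub_distrib, range_eq_Ico,
    sum_eq_sum_Ico_succ_bot (Nat.sub_pos_of_lt hp)]
  simp [Nat.div_self (zero_lt_one.trans hp), mul_sub]

theorem cast_choose_pred_prime {p k : ℕ} [Fact p.Prime] (hk : k < p) :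
    ((p - 1).choose k : ZMod p) = (-1) ^ k := by
  have hp : p.Prime := Fact.out
  induction k with
  | zero => simp
  | succ k ih =>
    have hpascal : p.choose (k + 1) = (p - 1).choose k + (p - 1).choose (k + 1) := by
      rw [← Nat.choose_succ_succ', Nat.sub_add_cancel hp.one_le]
    have hzero : (p.choose (k + 1) : ZMod p) = 0 :=
      (ZMod.natCast_eq_zero_iff _ _).2 (hp.dvd_choose_self k.succ_ne_zero hk)
    rw [hpascal, Nat.cast_add, ih (by omega)] at hzero
    linear_combination hzero

theorem cast_choose_div_prime {p k : ℕ} [Fact p.Prime] (hk : k + 1 < p) :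
    ((p.choose (k + 1) / p : ℕ) : ZMod p) = (-1) ^ k / (k + 1) := by
  have hp : p.Prime := Fact.out
  have hmul : (k + 1) * (p.choose (k + 1) / p) = (p - 1).choose k := by
    apply Nat.eq_of_mul_eq_mul_left hp.pos
    have h := Nat.add_one_mul_choose_eq (p - 1) k
    rw [Nat.sub_add_cancel hp.one_le] at h
    rw [mul_left_comm, Nat.mul_div_cancel' (hp.dvd_choose_self k.succ_ne_zero hk), h, mul_comm]
  have hne : ((k + 1 : ℕ) : ZMod p) ≠ 0 := by
    rw [Ne, ZMod.natCast_eq_zero_iff]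
    exact Nat.not_dvd_of_pos_of_lt k.succ_pos hk
  rw [eq_div_iff (by exact_mod_cast hne), mul_comm, ← cast_choose_pred_prime (by omega : k < p),
    ← hmul]
  push_cast
  ring

end BinomialQuotient

/-- The localization `ℤ_(p)`, as a subring of `ℚ`. -/
def pIntegralRat (p : ℕ) [Fact p.Prime] : Subring ℚ where
  carrier := {q | ¬ p ∣ q.den}
  mul_mem' {a b} ha hb h :=
    ((Fact.out : p.Prime).dvd_mul.1 (h.trans (Rat.mul_den_dvd a b))).elim ha hb
  one_mem' := (Fact.out : p.Prime).not_dvd_one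
  add_mem' {a b} ha hb h :=
    ((Fact.out : p.Prime).dvd_mul.1 (h.trans (Rat.add_den_dvd a b))).elim ha hb
  zero_mem' := (Fact.out : p.Prime).not_dvd_one
  neg_mem' {a} ha := by rwa [Set.mem_ofPred_eq, Rat.den_neg_eq_den]

namespace pIntegralRat

variable {p : ℕ} [Fact p.Prime]

theorem mem_iff {q : ℚ} : q ∈ pIntegralRat p ↔ ¬ p ∣ q.den := Iff.rfl

theorem den_cast_ne_zero {q : ℚ} (hq : q ∈ pIntegralRat p) : (q.den : ZMod p) ≠ 0 := by
  rwa [Ne, ZMod.natCast_eq_zero_iff]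

/-- On `ℤ_(p)` the cast `ℚ → ZMod p` is a ring hom; outside it, it divides by `0`. -/
def reduce : pIntegralRat p →+* ZMod p where
  toFun q := ((q : ℚ) : ZMod p)
  map_one' := Rat.cast_one
  map_mul' a b := Rat.cast_mul_of_ne_zero (den_cast_ne_zero a.2) (den_cast_ne_zero b.2)
  map_zero' := Rat.cast_zero
  map_add' a b := Rat.cast_add_of_ne_zero (den_cast_ne_zero a.2) (den_cast_ne_zero b.2)

theorem reduce_apply (q : pIntegralRat p) : reduce q = ((q : ℚ) : ZMod p) := rfl

theorem cast_sum_of_mem {ι : Type*} {t : Finset ι} {f : ι → ℚ}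
    (h : ∀ i ∈ t, f i ∈ pIntegralRat p) :
    ((∑ i ∈ t, f i : ℚ) : ZMod p) = ∑ i ∈ t, (f i : ZMod p) := by
  have h' := map_sum reduce (fun i : t => (⟨f i, h i i.2⟩ : pIntegralRat p)) t.attach
  simp only [reduce_apply, AddSubmonoidClass.coe_finsetSum] at h'
  rwa [sum_attach t (fun i => (f i : ZMod p)), sum_attach t f] at h'

theorem mem_of_den_lt {q : ℚ} (h : q.den < p) : q ∈ pIntegralRat p :=
  Nat.not_dvd_of_pos_of_lt q.pos h

theorem inv_natCast_mem {m : ℕ} (hm : ¬ p ∣ m) : (m : ℚ)⁻¹ ∈ pIntegralRat p := by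
  rw [mem_iff, Rat.inv_natCast_den]
  split_ifs
  exacts [(Fact.out : p.Prime).not_dvd_one, hm]

theorem cast_inv_natCast {m : ℕ} (hm : ¬ p ∣ m) :
    (((m : ℚ)⁻¹ : ℚ) : ZMod p) = (m : ZMod p)⁻¹ := by
  rw [Rat.cast_inv_of_ne_zero, Rat.cast_natCast]
  rwa [Rat.num_natCast, Int.cast_natCast, Ne, ZMod.natCast_eq_zero_iff]

theorem div_prime_mem {q : ℚ} (hq : q ∈ pIntegralRat p) (h : (q : ZMod p) = 0) :
    q / p ∈ pIntegralRat p := by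
  rw [Rat.cast_def, div_eq_zero_iff, or_iff_left (den_cast_ne_zero hq),
    ZMod.intCast_zmod_eq_zero_iff_dvd] at h
  obtain ⟨m, hm⟩ := h
  have hdiv : q / p = Rat.divInt m q.den := by
    rw [Rat.divInt_eq_div]
    conv_lhs => rw [← Rat.num_div_den q, hm]
    have : (p : ℚ) ≠ 0 := by exact_mod_cast (Fact.out : p.Prime).ne_zero
    push_cast
    field_simp
  intro hdvd
  exact hq (Int.natCast_dvd_natCast.1
    ((Int.natCast_dvd_natCast.2 hdvd).trans (hdiv ▸ Rat.den_dvd m q.den)))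

variable {a b : ℚ} (ha : a ∈ pIntegralRat p)
include ha

theorem cast_mul_of_mem (hb : b ∈ pIntegralRat p) : ((a * b : ℚ) : ZMod p) = a * b :=
  map_mul reduce ⟨a, ha⟩ ⟨b, hb⟩

theorem cast_add_of_mem (hb : b ∈ pIntegralRat p) : ((a + b : ℚ) : ZMod p) = a + b :=
  map_add reduce ⟨a, ha⟩ ⟨b, hb⟩

theorem cast_pow_of_mem (n : ℕ) : ((a ^ n : ℚ) : ZMod p) = (a : ZMod p) ^ n :=
  map_pow reduce ⟨a, ha⟩ n

theorem binomialQuotient_mem : binomialQuotient p a ∈ pIntegralRat p :=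
  map_binomialQuotient (pIntegralRat p).subtype p ⟨a, ha⟩ ▸
    (binomialQuotient p (⟨a, ha⟩ : pIntegralRat p)).2

theorem cast_binomialQuotient :
    ((binomialQuotient p a : ℚ) : ZMod p) = binomialQuotient p (a : ZMod p) := by
  have hcoe : ((binomialQuotient p (⟨a, ha⟩ : pIntegralRat p) : pIntegralRat p) : ℚ) =
      binomialQuotient p a :=
    map_binomialQuotient (pIntegralRat p).subtype p ⟨a, ha⟩
  rw [← hcoe]
  exact map_binomialQuotient reduce p ⟨a, ha⟩

theorem mul_fermatQuotient_mem :
    a * (a ^ (p - 1) - 1) / p ∈ pIntegralRat p := by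
  have hp : p.Prime := Fact.out
  refine div_prime_mem (mul_mem ha (sub_mem (pow_mem ha _) (one_mem _))) ?_
  change reduce ((⟨a, ha⟩ : pIntegralRat p) * (⟨a, ha⟩ ^ (p - 1) - 1)) = 0
  rw [map_mul, map_sub, map_pow, map_one, mul_sub, ← pow_succ', Nat.sub_add_cancel hp.one_le,
    ZMod.pow_card, mul_one, sub_self]

end pIntegralRat

theorem add_one_mul_fermatQuotient {K : Type*} [Field K] [CharZero K] {p : ℕ} (hp : p.Prime)
    (y : K) : (y + 1) * ((y + 1) ^ (p - 1) - 1) / p =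
      y * (y ^ (p - 1) - 1) / p + binomialQuotient p y := by
  have hp0 : (p : K) ≠ 0 := by exact_mod_cast hp.ne_zero
  have hpow : ∀ z : K, z * (z ^ (p - 1) - 1) = z ^ p - z := fun z => by
    rw [mul_sub, ← pow_succ', Nat.sub_add_cancel hp.one_le, mul_one]
  rw [hpow, hpow, div_eq_iff hp0, add_mul, div_mul_cancel₀ _ hp0, mul_comm _ (p : K),
    prime_mul_binomialQuotient hp]
  ring

def gregoryTerm (s : ℕ → ℕ → ℕ) (n j : ℕ) (x : ℚ) : ℚ :=
  ((-1 : ℚ) ^ j / (j + 1 : ℚ)) * (s n j : ℚ) * ((x + 1) ^ (j + 1) - x ^ (j + 1))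

section Gregory

open pIntegralRat

variable {p : ℕ} [Fact p.Prime]

theorem gregoryTerm_eq_coe (s : ℕ → ℕ → ℕ) {x : ℚ} (hx : x ∈ pIntegralRat p)
    {n j : ℕ} (hj : ¬ p ∣ j + 1) :
    gregoryTerm s n j x = (((-1) ^ j * ⟨_, inv_natCast_mem hj⟩ * (s n j : pIntegralRat p) *
      ((⟨x, hx⟩ + 1) ^ (j + 1) - ⟨x, hx⟩ ^ (j + 1)) : pIntegralRat p) : ℚ) := by
  simp [gregoryTerm, div_eq_mul_inv]

theorem gregoryTerm_mem (s : ℕ → ℕ → ℕ) {x : ℚ} (hx : x ∈ pIntegralRat p)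
    {n j : ℕ} (hj : ¬ p ∣ j + 1) : gregoryTerm s n j x ∈ pIntegralRat p :=
  gregoryTerm_eq_coe s hx hj ▸ Subtype.prop _

variable {s : ℕ → ℕ → ℕ}
  (hs : ∀ (n : ℕ) (u : ℚ), ∏ i ∈ range n, (u - (i : ℚ)) =
    ∑ j ∈ range (n + 1), (-1 : ℚ) ^ (n - j) * (s n j : ℚ) * u ^ j)
include hs

theorem cast_gregoryTerm {x : ℚ} (hx : x ∈ pIntegralRat p) {j : ℕ}
    (hj : j ∈ Ico 1 (p - 1)) :
    (gregoryTerm s (p - 1) j x : ZMod p) = ((p.choose (j + 1) / p : ℕ) : ZMod p) *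
      (((x : ZMod p) + 1) ^ (j + 1) - (x : ZMod p) ^ (j + 1)) := by
  have hjp : j + 1 < p := by have := mem_Ico.1 hj; omega
  have hndvd : ¬ p ∣ j + 1 := Nat.not_dvd_of_pos_of_lt j.succ_pos hjp
  rw [gregoryTerm_eq_coe s hx hndvd, ← reduce_apply]
  simp only [map_mul, map_sub, map_pow, map_add, map_neg, map_one, map_natCast, reduce_apply]
  rw [cast_inv_natCast hndvd, cast_stirling_pred_prime hs
    (mem_Ico.2 ⟨(mem_Ico.1 hj).1, by omega⟩), cast_choose_div_prime hjp]
  push_cast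
  ring

variable {G : ℕ → ℚ → ℚ}
  (hG : ∀ n : ℕ, 1 ≤ n → ∀ x : ℚ,
    G n x = ((-1 : ℚ) ^ n / (n.factorial : ℚ)) * ∑ j ∈ Icc 1 n, gregoryTerm s n j x)
include hG

theorem gregory_pred_prime_sub_inv_factorial (x : ℚ) :
    G (p - 1) x - 1 / (p.factorial : ℚ) = (((p - 1).factorial : ℚ))⁻¹ *
      ((-1) ^ (p - 1) * ∑ j ∈ Ico 1 (p - 1), gregoryTerm s (p - 1) j x +
        binomialQuotient p x) := by
  have hp : p.Prime := Fact.out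
  have hsplit : ∑ j ∈ Icc 1 (p - 1), gregoryTerm s (p - 1) j x =
      ∑ j ∈ Ico 1 (p - 1), gregoryTerm s (p - 1) j x + gregoryTerm s (p - 1) (p - 1) x := by
    rw [← Ico_add_one_right_eq_Icc, sum_Ico_succ_top (Nat.le_sub_one_of_lt hp.one_lt)]
  have hlast :
      gregoryTerm s (p - 1) (p - 1) x = (-1) ^ (p - 1) / p * ((x + 1) ^ p - x ^ p) := by
    rw [gregoryTerm, stirling_self hs, Nat.sub_add_cancel hp.one_le, Nat.cast_pred hp.pos]
    push_cast
    ring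
  have hfact : (p.factorial : ℚ) = p * (p - 1).factorial := by
    rw [← Nat.mul_factorial_pred hp.ne_zero, Nat.cast_mul]
  have hsign : (-1 : ℚ) ^ (p - 1) * (-1) ^ (p - 1) = 1 := by
    rw [← mul_pow, neg_one_mul, neg_neg, one_pow]
  have hB := prime_mul_binomialQuotient hp x
  have hp0 : (p : ℚ) ≠ 0 := by exact_mod_cast hp.ne_zero
  rw [hG (p - 1) (Nat.le_sub_one_of_lt hp.one_lt), hsplit, hlast, hfact]
  field_simp
  linear_combination ((x + 1) ^ p - x ^ p) * hsign - hB

theorem cast_gregory_pred_prime_sub_inv_factorial {x : ℚ} (hx : x ∈ pIntegralRat p) :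
    ((G (p - 1) x - 1 / (p.factorial : ℚ) : ℚ) : ZMod p) =
      1 - binomialQuotient p ((x : ZMod p) + 1) := by
  have hp : p.Prime := Fact.out
  have hf : ¬ p ∣ (p - 1).factorial := by
    rw [hp.dvd_factorial]
    exact Nat.not_le_of_lt (Nat.sub_one_lt hp.ne_zero)
  have hterm : ∀ j ∈ Ico 1 (p - 1), gregoryTerm s (p - 1) j x ∈ pIntegralRat p := fun j hj =>
    gregoryTerm_mem s hx (Nat.not_dvd_of_pos_of_lt j.succ_pos (by have := mem_Ico.1 hj; omega))
  have hsign : (-1 : ℚ) ^ (p - 1) ∈ pIntegralRat p := pow_mem (neg_mem (one_mem _)) _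
  have hsum := mul_mem hsign (sum_mem hterm)
  have hB := binomialQuotient_mem hx
  rw [gregory_pred_prime_sub_inv_factorial hs hG,
    cast_mul_of_mem (inv_natCast_mem hf) (add_mem hsum hB), cast_add_of_mem hsum hB,
    cast_mul_of_mem hsign (sum_mem hterm), cast_pow_of_mem (neg_mem (one_mem _)),
    cast_inv_natCast hf, cast_sum_of_mem hterm, cast_binomialQuotient hx,
    sum_congr rfl fun j hj => cast_gregoryTerm hs hx hj, ZMod.wilsons_lemma, Rat.cast_neg,
    Rat.cast_one, ZMod.pow_card_sub_one_eq_one (neg_ne_zero.2 one_ne_zero)]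
  linear_combination binomialQuotient_add_one_sub hp.one_lt (x : ZMod p)

end Gregory

theorem stmt_17_general (p : ℕ) [Fact p.Prime]
    (s : ℕ → ℕ → ℕ)
    (hs : ∀ (n : ℕ) (u : ℚ),
      ∏ i ∈ Finset.range n, (u - (i : ℚ)) =
        ∑ j ∈ Finset.range (n + 1), (-1 : ℚ) ^ (n - j) * (s n j : ℚ) * u ^ j)
    (G : ℕ → ℚ → ℚ)
    (hG : ∀ n : ℕ, 1 ≤ n → ∀ x : ℚ,
      G n x = ((-1 : ℚ) ^ n / (n.factorial : ℚ)) *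
        ∑ j ∈ Finset.Icc 1 n, ((-1 : ℚ) ^ j / (j + 1 : ℚ)) * (s n j : ℚ) *
          ((x + 1) ^ (j + 1) - x ^ (j + 1)))
    (x : ℚ) (hden : x.den < p) :
    ((G (p - 1) x - 1 / (p.factorial : ℚ) : ℚ) : ZMod p) =
      -((((x + 2) * ((x + 2) ^ (p - 1) - 1) / (p : ℚ)) : ℚ) : ZMod p)
        + ((((x + 1) * ((x + 1) ^ (p - 1) - 1) / (p : ℚ)) : ℚ) : ZMod p) + 1 := by
  have hx := pIntegralRat.mem_of_den_lt hden
  have hx1 : x + 1 ∈ pIntegralRat p := add_mem hx (one_mem _)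
  rw [show x + 2 = x + 1 + 1 by ring, add_one_mul_fermatQuotient Fact.out,
    pIntegralRat.cast_add_of_mem (pIntegralRat.mul_fermatQuotient_mem hx1)
      (pIntegralRat.binomialQuotient_mem hx1),
    pIntegralRat.cast_binomialQuotient hx1, pIntegralRat.cast_add_of_mem hx (one_mem _),
    Rat.cast_one, cast_gregory_pred_prime_sub_inv_factorial hs hG hx]
  ring

/-- For a sufficiently large prime `p` and a rational `x` that is a `p`-adic integer with
`x+1, x+2 ≢ 0 (mod p)`, the Gregory polynomial value satisfies
`G_{p-1}(x) - 1/p! ≡ -(x+2) q_p(x+2) + (x+1) q_p(x+1) + 1 (mod p)`,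
where `q_p(y) = (y^{p-1}-1)/p` is the Fermat quotient. Here the Gregory polynomials are
given by the explicit formula in terms of the unsigned Stirling numbers of the first kind. -/
theorem stmt_17 (p : ℕ) [Fact p.Prime] (hodd : Odd p)
    (s : ℕ → ℕ → ℕ)
    (hs : ∀ (n : ℕ) (u : ℚ),
      ∏ i ∈ Finset.range n, (u - (i : ℚ)) =
        ∑ j ∈ Finset.range (n + 1), (-1 : ℚ) ^ (n - j) * (s n j : ℚ) * u ^ j)
    (G : ℕ → ℚ → ℚ)
    (hG : ∀ n : ℕ, 1 ≤ n → ∀ x : ℚ,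
      G n x = ((-1 : ℚ) ^ n / (n.factorial : ℚ)) *
        ∑ j ∈ Finset.Icc 1 n, ((-1 : ℚ) ^ j / (j + 1 : ℚ)) * (s n j : ℚ) *
          ((x + 1) ^ (j + 1) - x ^ (j + 1)))
    (x : ℚ) (hden : x.den < p)
    (h1 : (x : ZMod p) + 1 ≠ 0) (h2 : (x : ZMod p) + 2 ≠ 0) :
    ((G (p - 1) x - 1 / (p.factorial : ℚ) : ℚ) : ZMod p) =
      -((((x + 2) * ((x + 2) ^ (p - 1) - 1) / (p : ℚ)) : ℚ) : ZMod p)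
        + ((((x + 1) * ((x + 1) ^ (p - 1) - 1) / (p : ℚ)) : ℚ) : ZMod p) + 1 :=
  stmt_17_general p s hs G hG x hden
end
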